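/- arXiv:2212.00700 — 2 statements merged into one kernel-verified Lean document; each statement's English description precedes it below -/
import Mathlib

section
/- Let m(ζ) = (1 − γ − ζ − sqrt((ζ − γ − 1)^2 − 4γ)) / (2γζ) for ζ < 0 and 0 < γ < 1. Then the limit of m'(ζ) as ζ → 0⁻ equals 1/(1 − γ)^3. -/
/-!
Multiplying numerator and denominator by the conjugate `1 - γ - ζ + √D(ζ)`, where
`D(ζ) = (ζ - γ - 1)² - 4γ`, turns `m` into `2 / (1 - γ - ζ + √D(ζ))` on `ζ < 0`, since
`(1 - γ - ζ)² - D(ζ) = 4γζ`. As `D(0) = (1 - γ)² > 0`, the new expression is smooth at `0`, so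
`m'(ζ)` tends to its derivative at `0`, which equals `1 / (1 - γ)³`.
-/

open Filter Set Topology

theorem sub_sqrt_div_eq_div_add_sqrt {a b c : ℝ} (hb : 0 ≤ b) (hc : c ≠ 0)
    (hab : a + √b ≠ 0) (habc : a ^ 2 - b = 2 * c) :
    (a - √b) / c = 2 / (a + √b) := by
  rw [div_eq_div_iff hc hab]
  nlinarith [Real.sq_sqrt hb]

theorem tendsto_deriv_nhdsWithin_of_eqOn {f g : ℝ → ℝ} {s : Set ℝ} {x : ℝ} (hs : IsOpen s)
    (hfg : EqOn f g s) (hg : ContDiffAt ℝ 1 g x) :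
    Tendsto (deriv f) (𝓝[s] x) (𝓝 (deriv g x)) := by
  have hcont : ContinuousAt (deriv g) x :=
    (hg.continuousAt_fderiv one_ne_zero).clm_apply continuousAt_const
  refine hcont.continuousWithinAt.tendsto.congr' ?_
  filter_upwards [self_mem_nhdsWithin] with y hy
  exact (eventuallyEq_of_mem (hs.mem_nhds hy) hfg).deriv_eq.symm

section MarchenkoPastur

variable {γ : ℝ}

theorem mp_eqOn_rationalized (hγ0 : 0 < γ) (hγ1 : γ < 1) :
    EqOn (fun ζ : ℝ => (1 - γ - ζ - √((ζ - γ - 1) ^ 2 - 4 * γ)) / (2 * γ * ζ))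
      (fun ζ : ℝ => 2 / (1 - γ - ζ + √((ζ - γ - 1) ^ 2 - 4 * γ))) (Iio 0) := by
  intro ζ (hζ : ζ < 0)
  refine sub_sqrt_div_eq_div_add_sqrt (by nlinarith) (by nlinarith) ?_ (by ring)
  have := Real.sqrt_nonneg ((ζ - γ - 1) ^ 2 - 4 * γ)
  linarith

theorem mp_disc_zero : ((0 : ℝ) - γ - 1) ^ 2 - 4 * γ = (1 - γ) ^ 2 := by ring

theorem sqrt_mp_disc_zero (hγ1 : γ ≤ 1) : √(((0 : ℝ) - γ - 1) ^ 2 - 4 * γ) = 1 - γ := by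
  rw [mp_disc_zero, Real.sqrt_sq (by linarith)]

theorem contDiffAt_mp_rationalized_zero (hγ1 : γ < 1) :
    ContDiffAt ℝ 1 (fun ζ : ℝ => 2 / (1 - γ - ζ + √((ζ - γ - 1) ^ 2 - 4 * γ))) 0 := by
  refine contDiffAt_const.div (contDiffAt_const.sub contDiffAt_id |>.add ?_) ?_
  · exact ContDiffAt.sqrt (by fun_prop) (by rw [mp_disc_zero]; nlinarith)
  · rw [sqrt_mp_disc_zero hγ1.le]
    linarith

theorem hasDerivAt_mp_rationalized_zero (hγ1 : γ < 1) :
    HasDerivAt (fun ζ : ℝ => 2 / (1 - γ - ζ + √((ζ - γ - 1) ^ 2 - 4 * γ)))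
      (1 / (1 - γ) ^ 3) 0 := by
  have h1γ : 1 - γ ≠ 0 := by linarith
  have hs := sqrt_mp_disc_zero hγ1.le
  have hdisc : HasDerivAt (fun ζ : ℝ => (ζ - γ - 1) ^ 2 - 4 * γ) (-2 * (1 + γ)) 0 :=
    (((((hasDerivAt_id (0 : ℝ)).sub_const γ).sub_const 1).fun_pow 2).sub_const
      (4 * γ)).congr_deriv
      (by simp only [Nat.cast_ofNat, id_eq, Nat.add_one_sub_one, pow_one, mul_one]; ring)
  have hden : HasDerivAt (fun ζ : ℝ => 1 - γ - ζ + √((ζ - γ - 1) ^ 2 - 4 * γ))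
      (-1 - (1 + γ) / (1 - γ)) 0 :=
    (((hasDerivAt_id (0 : ℝ)).const_sub (1 - γ)).fun_add
      (hdisc.sqrt (by rw [mp_disc_zero]; positivity))).congr_deriv
      (by rw [hs]; field_simp; ring)
  refine ((hasDerivAt_const (0 : ℝ) (2 : ℝ)).fun_div hden ?_).congr_deriv ?_
  · rw [hs, sub_zero, ← two_mul]
    positivity
  · rw [hs, sub_zero]
    field_simp
    ring

end MarchenkoPastur

/-- The derivative of the Stieltjes transform of the Marchenko–Pastur law satisfies
`m'(ζ) → 1/(1-γ)^3` as `ζ → 0⁻`. -/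
theorem mp_stieltjes_deriv_tendsto_at_zero (γ : ℝ) (hγ0 : 0 < γ) (hγ1 : γ < 1) :
    Tendsto (deriv (fun ζ : ℝ =>
        (1 - γ - ζ - Real.sqrt ((ζ - γ - 1) ^ 2 - 4 * γ)) / (2 * γ * ζ)))
      (nhdsWithin 0 (Set.Iio 0)) (nhds (1 / (1 - γ) ^ 3)) := by
  have h := tendsto_deriv_nhdsWithin_of_eqOn isOpen_Iio (mp_eqOn_rationalized hγ0 hγ1)
    (contDiffAt_mp_rationalized_zero hγ1)
  rwa [(hasDerivAt_mp_rationalized_zero hγ1).deriv] at h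
end

section
/- For 0 < γ < 1, the integral of 1/s^2 against the Marchenko–Pastur law with ratio γ equals 1/(1 − γ)^3. -/
open Real Set

/-!
With `p = 1 - √γ` and `q = 1 + √γ` the integral is
`(2πγ)⁻¹ ∫_{p²}^{q²} √((q² - s)(s - p²)) / s³ ds`.
Writing `L(s) = (p² + q²) s - 2p²q²`, this integrand has the elementary antiderivative
`√((q² - s)(s - p²)) L(s) / (4p²q²s²) + (q² - p²)² / (8(pq)³) · arcsin (L(s) / ((q² - p²) s))`,
whose arcsin argument runs from `-1` at `p²` to `1` at `q²`, while the square root vanishes at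
both ends. Hence the integral is `π (q² - p²)² / (8(pq)³)`, and `pq = 1 - γ`, `q² - p² = 4√γ`.
-/

noncomputable def antiderivSqrtDivCube (p q s : ℝ) : ℝ :=
  √((q ^ 2 - s) * (s - p ^ 2)) * ((p ^ 2 + q ^ 2) * s - 2 * p ^ 2 * q ^ 2) /
      (4 * p ^ 2 * q ^ 2 * s ^ 2) +
    (q ^ 2 - p ^ 2) ^ 2 / (8 * (p * q) ^ 3) *
      arcsin (((p ^ 2 + q ^ 2) * s - 2 * p ^ 2 * q ^ 2) / ((q ^ 2 - p ^ 2) * s))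

theorem hasDerivAt_sqrt_sub_mul_sub {a b s : ℝ} (has : a < s) (hsb : s < b) :
    HasDerivAt (fun t => √((b - t) * (t - a)))
      ((a + b - 2 * s) / (2 * √((b - s) * (s - a)))) s := by
  have hpoly : HasDerivAt (fun t => (b - t) * (t - a)) (a + b - 2 * s) s :=
    (((hasDerivAt_id' s).const_sub b).fun_mul ((hasDerivAt_id' s).sub_const a)).congr_deriv
      (by ring)
  exact hpoly.sqrt (mul_pos (sub_pos.2 hsb) (sub_pos.2 has)).ne'

theorem hasDerivAt_arcsin_antiderivSqrtDivCube_arg {p q s : ℝ} (hp : 0 < p) (hq : 0 < q)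
    (hs : s ∈ Ioo (p ^ 2) (q ^ 2)) :
    HasDerivAt
      (fun t => arcsin (((p ^ 2 + q ^ 2) * t - 2 * p ^ 2 * q ^ 2) / ((q ^ 2 - p ^ 2) * t)))
      (p * q / (s * √((q ^ 2 - s) * (s - p ^ 2)))) s := by
  obtain ⟨hps, hsq⟩ := hs
  have hs : 0 < s := lt_trans (by positivity) hps
  have hd : 0 < q ^ 2 - p ^ 2 := by linarith
  have hR2 : √((q ^ 2 - s) * (s - p ^ 2)) ^ 2 = (q ^ 2 - s) * (s - p ^ 2) :=
    sq_sqrt (by nlinarith)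
  have hR : 0 < √((q ^ 2 - s) * (s - p ^ 2)) := sqrt_pos.2 (by nlinarith)
  set y := ((p ^ 2 + q ^ 2) * s - 2 * p ^ 2 * q ^ 2) / ((q ^ 2 - p ^ 2) * s)
  have hy : 1 - y ^ 2 =
      (2 * p * q * √((q ^ 2 - s) * (s - p ^ 2)) / ((q ^ 2 - p ^ 2) * s)) ^ 2 := by
    simp only [y, div_pow, mul_pow, hR2]
    field_simp
    ring
  have hy_sqrt :
      √(1 - y ^ 2) = 2 * p * q * √((q ^ 2 - s) * (s - p ^ 2)) / ((q ^ 2 - p ^ 2) * s) := by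
    rw [hy, sqrt_sq (by positivity)]
  have hy_pos : 0 < 1 - y ^ 2 := by rw [hy]; positivity
  have harg :
      HasDerivAt (fun t => ((p ^ 2 + q ^ 2) * t - 2 * p ^ 2 * q ^ 2) / ((q ^ 2 - p ^ 2) * t))
      (2 * p ^ 2 * q ^ 2 / ((q ^ 2 - p ^ 2) * s ^ 2)) s := by
    refine ((((hasDerivAt_id' s).const_mul _).sub_const _).div ((hasDerivAt_id' s).const_mul _)
      (by positivity)).congr_deriv ?_
    field_simp
    ring
  refine ((hasDerivAt_arcsin (by nlinarith) (by nlinarith)).comp s harg).congr_deriv ?_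
  rw [hy_sqrt]
  field_simp

theorem continuousOn_antiderivSqrtDivCube {p q : ℝ} (hp : 0 < p) (hpq : p < q) :
    ContinuousOn (antiderivSqrtDivCube p q) (Icc (p ^ 2) (q ^ 2)) := by
  have hs : ∀ s ∈ Icc (p ^ 2) (q ^ 2), 0 < s := fun s hs => lt_of_lt_of_le (by positivity) hs.1
  have : 0 < q := hp.trans hpq
  have : p ^ 2 < q ^ 2 := by gcongr
  unfold antiderivSqrtDivCube
  fun_prop (disch := intro s hs'; have := hs s hs'; positivity)

theorem hasDerivAt_antiderivSqrtDivCube {p q s : ℝ} (hp : 0 < p) (hq : 0 < q)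
    (hs : s ∈ Ioo (p ^ 2) (q ^ 2)) :
    HasDerivAt (antiderivSqrtDivCube p q) (√((q ^ 2 - s) * (s - p ^ 2)) / s ^ 3) s := by
  have hs0 : 0 < s := lt_trans (by positivity) hs.1
  have hR2 : √((q ^ 2 - s) * (s - p ^ 2)) ^ 2 = (q ^ 2 - s) * (s - p ^ 2) :=
    sq_sqrt (by nlinarith [hs.1, hs.2])
  have hR : 0 < √((q ^ 2 - s) * (s - p ^ 2)) := sqrt_pos.2 (by nlinarith [hs.1, hs.2])
  have hd : 0 < q ^ 2 - p ^ 2 := by linarith [hs.1, hs.2]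
  have hL : HasDerivAt (fun t => (p ^ 2 + q ^ 2) * t - 2 * p ^ 2 * q ^ 2) (p ^ 2 + q ^ 2) s :=
    ((hasDerivAt_id' s).const_mul _).sub_const _ |>.congr_deriv (by ring)
  have hD : HasDerivAt (fun t => 4 * p ^ 2 * q ^ 2 * t ^ 2) (8 * p ^ 2 * q ^ 2 * s) s :=
    ((hasDerivAt_pow 2 s).const_mul _).congr_deriv (by ring)
  refine ((((hasDerivAt_sqrt_sub_mul_sub hs.1 hs.2).fun_mul hL).div hD (by positivity)).add
    ((hasDerivAt_arcsin_antiderivSqrtDivCube_arg hp hq hs).const_mul _)).congr_deriv ?_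
  field_simp
  rw [hR2]
  ring

theorem antiderivSqrtDivCube_sq_right {p q : ℝ} (hp : 0 < p) (hpq : p < q) :
    antiderivSqrtDivCube p q (q ^ 2) = (q ^ 2 - p ^ 2) ^ 2 / (8 * (p * q) ^ 3) * (π / 2) := by
  have hq : 0 < q := hp.trans hpq
  have hd : q ^ 2 - p ^ 2 ≠ 0 := by nlinarith
  have harg : ((p ^ 2 + q ^ 2) * q ^ 2 - 2 * p ^ 2 * q ^ 2) / ((q ^ 2 - p ^ 2) * q ^ 2) = 1 := by
    field_simp
    ring
  simp [antiderivSqrtDivCube, harg]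

theorem antiderivSqrtDivCube_sq_left {p q : ℝ} (hp : 0 < p) (hpq : p < q) :
    antiderivSqrtDivCube p q (p ^ 2) = -((q ^ 2 - p ^ 2) ^ 2 / (8 * (p * q) ^ 3) * (π / 2)) := by
  have hd : q ^ 2 - p ^ 2 ≠ 0 := by nlinarith
  have harg : ((p ^ 2 + q ^ 2) * p ^ 2 - 2 * p ^ 2 * q ^ 2) / ((q ^ 2 - p ^ 2) * p ^ 2) = -1 := by
    field_simp
    ring
  simp [antiderivSqrtDivCube, harg]

theorem integral_sqrt_sub_mul_sub_div_pow_three {p q : ℝ} (hp : 0 < p) (hpq : p < q) :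
    ∫ s in p ^ 2..q ^ 2, √((q ^ 2 - s) * (s - p ^ 2)) / s ^ 3 =
      π * (q ^ 2 - p ^ 2) ^ 2 / (8 * (p * q) ^ 3) := by
  have hq : 0 < q := hp.trans hpq
  have hle : p ^ 2 ≤ q ^ 2 := by gcongr
  have hs : ∀ s ∈ uIcc (p ^ 2) (q ^ 2), s ^ 3 ≠ 0 := fun s hs =>
    pow_ne_zero 3 (lt_of_lt_of_le (by positivity) (uIcc_of_le hle ▸ hs).1).ne'
  rw [intervalIntegral.integral_eq_sub_of_hasDerivAt_of_le hle
    (continuousOn_antiderivSqrtDivCube hp hpq)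
    (fun s hs => hasDerivAt_antiderivSqrtDivCube hp hq hs)
    (ContinuousOn.intervalIntegrable (by fun_prop (disch := exact hs))),
    antiderivSqrtDivCube_sq_right hp hpq, antiderivSqrtDivCube_sq_left hp hpq]
  ring

/-- For `0 < γ < 1`, the integral of `1/s²` against the Marchenko–Pastur law with
ratio `γ` equals `1/(1-γ)³`. -/
theorem mp_integral_inv_sq (γ : ℝ) (hγ0 : 0 < γ) (hγ1 : γ < 1) :
    ∫ s in ((1 - Real.sqrt γ) ^ 2)..((1 + Real.sqrt γ) ^ 2),
      (1 / s ^ 2) * (Real.sqrt (((1 + Real.sqrt γ) ^ 2 - s) * (s - (1 - Real.sqrt γ) ^ 2)) /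
        (2 * Real.pi * γ * s)) = 1 / (1 - γ) ^ 3 := by
  have hsqrt_pos : 0 < √γ := sqrt_pos.2 hγ0
  have hsqrt_lt : √γ < 1 := (sqrt_lt' one_pos).2 (by simpa using hγ1)
  have hsq : √γ ^ 2 = γ := sq_sqrt hγ0.le
  have hintegrand : ∀ s : ℝ,
      1 / s ^ 2 * (√(((1 + √γ) ^ 2 - s) * (s - (1 - √γ) ^ 2)) / (2 * π * γ * s)) =
        (2 * π * γ)⁻¹ * (√(((1 + √γ) ^ 2 - s) * (s - (1 - √γ) ^ 2)) / s ^ 3) :=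
    fun s => by ring
  simp_rw [hintegrand]
  rw [intervalIntegral.integral_const_mul,
    integral_sqrt_sub_mul_sub_div_pow_three (by linarith) (by linarith)]
  have h1 : (1 + √γ) ^ 2 - (1 - √γ) ^ 2 = 4 * √γ := by ring
  have h2 : (1 - √γ) * (1 + √γ) = 1 - γ := by linear_combination -hsq
  rw [h1, h2]
  have : 1 - γ ≠ 0 := by linarith
  field_simp
  linear_combination 16 * hsq
end
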